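/- In the semidirect product G = Z_q ⋊ Z_{p²} with bab^{-1} = a^i where ord_q(i) = p², the element a^m b^n (with 1 ≤ n < p²) has order p if and only if p divides n, and G has exactly (p-1)q elements of order p. -/

import Mathlib

/-!
Every element of `G` is uniquely `a ^ m * b ^ n` with `m < q`, `n < p²`, since `⟨a⟩` and `⟨b⟩` have
coprime orders and `|G| = q p²`. Moving the `b`'s to the right gives
`(a ^ m * b ^ n) ^ p = a ^ (m S) * b ^ (n p)` with `S = ∑_{j < p} i ^ (n j)`. If `p ∣ n` but
`p² ∤ n`, then `i ^ n` is a nontrivial `p`-th root of unity mod `q`, so `q ∣ S` and the `p`-th power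
vanishes; conversely `b ^ (n p) = 1` forces `p ∣ n`. Counting the pairs `(m, n)` with `n ≠ 0`,
`p ∣ n` gives `q (p - 1)` elements of order `p`.
-/

open Finset

theorem geom_sum_eq_zero_of_pow_eq_one {R : Type*} [CommRing R] [IsDomain R] {x : R} {k : ℕ}
    (hx : x ≠ 1) (hxk : x ^ k = 1) : ∑ j ∈ range k, x ^ j = 0 := by
  have h := geom_sum_mul x k
  rw [hxk, sub_self] at h
  exact (mul_eq_zero.mp h).resolve_right (sub_ne_zero.mpr hx)

section Conjugation

variable {G : Type*} [Group G] {a b : G} {i : ℕ}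

theorem conj_pow_eq_pow_pow (hrel : b * a * b⁻¹ = a ^ i) (k : ℕ) :
    b ^ k * a * (b ^ k)⁻¹ = a ^ i ^ k := by
  induction k with
  | zero => simp
  | succ k ih =>
    calc b ^ (k + 1) * a * (b ^ (k + 1))⁻¹ = b * (b ^ k * a * (b ^ k)⁻¹) * b⁻¹ := by group
      _ = (b * a * b⁻¹) ^ i ^ k := by rw [ih, conj_pow]
      _ = a ^ i ^ (k + 1) := by rw [hrel, ← pow_mul, pow_succ']

theorem pow_mul_pow_eq_pow_mul_pow (hrel : b * a * b⁻¹ = a ^ i) (m n : ℕ) :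
    b ^ n * a ^ m = a ^ (i ^ n * m) * b ^ n := by
  rw [pow_mul, ← conj_pow_eq_pow_pow hrel, conj_pow]
  group

theorem pow_mul_pow_pow (hrel : b * a * b⁻¹ = a ^ i) (m n k : ℕ) :
    (a ^ m * b ^ n) ^ k = a ^ (m * ∑ j ∈ range k, i ^ (n * j)) * b ^ (n * k) := by
  induction k with
  | zero => simp
  | succ k ih =>
    have hsum : m * ∑ j ∈ range (k + 1), i ^ (n * j) =
        m * ∑ j ∈ range k, i ^ (n * j) + i ^ (n * k) * m := by
      rw [sum_range_succ]; ring
    calc (a ^ m * b ^ n) ^ (k + 1)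
        = a ^ (m * ∑ j ∈ range k, i ^ (n * j)) * (b ^ (n * k) * a ^ m) * b ^ n := by
          rw [pow_succ, ih]; group
      _ = _ := by rw [pow_mul_pow_eq_pow_mul_pow hrel, hsum, mul_add, pow_add, pow_add]; group

theorem orderOf_natCast_dvd_orderOf (hrel : b * a * b⁻¹ = a ^ i) :
    orderOf (i : ZMod (orderOf a)) ∣ orderOf b := by
  have h : a ^ i ^ orderOf b = a ^ 1 := by
    rw [← conj_pow_eq_pow_pow hrel, pow_orderOf_eq_one]
    group
  apply orderOf_dvd_of_pow_eq_one
  exact_mod_cast (ZMod.natCast_eq_natCast_iff _ _ _).mpr (pow_eq_pow_iff_modEq.mp h)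

end Conjugation

section Coprime

variable {G : Type*} [Group G] {a b : G}

theorem disjoint_zpowers_of_coprime (h : (orderOf a).Coprime (orderOf b)) :
    Disjoint (Subgroup.zpowers a) (Subgroup.zpowers b) :=
  Subgroup.disjoint_of_coprime_natCard <| by rwa [Nat.card_zpowers, Nat.card_zpowers]

theorem pow_eq_one_of_pow_mul_pow_eq_one (h : (orderOf a).Coprime (orderOf b)) {m n : ℕ}
    (hmn : a ^ m * b ^ n = 1) : a ^ m = 1 ∧ b ^ n = 1 :=
  Subgroup.disjoint_iff_mul_eq_one.mp (disjoint_zpowers_of_coprime h)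
    (Subgroup.npow_mem_zpowers a m) (Subgroup.npow_mem_zpowers b n) hmn

theorem injOn_pow_mul_pow (h : (orderOf a).Coprime (orderOf b)) :
    Set.InjOn (fun x : ℕ × ℕ => a ^ x.1 * b ^ x.2)
      (range (orderOf a) ×ˢ range (orderOf b) : Finset (ℕ × ℕ)) := by
  rintro ⟨m₁, n₁⟩ h₁ ⟨m₂, n₂⟩ h₂ heq
  simp only [coe_product, coe_range, Set.mem_prod, Set.mem_Iio] at h₁ h₂
  have hpow := Subgroup.mul_injective_of_disjoint (disjoint_zpowers_of_coprime h)
    (a₁ := (⟨a ^ m₁, Subgroup.npow_mem_zpowers a m₁⟩, ⟨b ^ n₁, Subgroup.npow_mem_zpowers b n₁⟩))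
    (a₂ := (⟨a ^ m₂, Subgroup.npow_mem_zpowers a m₂⟩, ⟨b ^ n₂, Subgroup.npow_mem_zpowers b n₂⟩))
    heq
  simp only [Prod.mk.injEq, Subtype.mk.injEq] at hpow
  rw [pow_injOn_Iio_orderOf h₁.1 h₂.1 hpow.1, pow_injOn_Iio_orderOf h₁.2 h₂.2 hpow.2]

theorem surjOn_pow_mul_pow [Fintype G] (h : (orderOf a).Coprime (orderOf b))
    (hcard : Nat.card G = orderOf a * orderOf b) :
    Set.SurjOn (fun x : ℕ × ℕ => a ^ x.1 * b ^ x.2)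
      (range (orderOf a) ×ˢ range (orderOf b) : Finset (ℕ × ℕ)) Set.univ := by
  rw [← coe_univ]
  refine surjOn_of_injOn_of_card_le _ (fun _ _ => mem_univ _) (injOn_pow_mul_pow h) ?_
  rw [card_product, card_range, card_range, card_univ, ← Nat.card_eq_fintype_card, hcard]

end Coprime

theorem orderOf_eq_of_closure_pair_eq_top {G : Type*} [Group G] {a b : G} {q : ℕ}
    (hq : q.Prime) (ha : a ^ q = 1) (hgen : Subgroup.closure {a, b} = ⊤)
    (hb : orderOf b < Nat.card G) : orderOf a = q := by
  have := Fact.mk hq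
  refine orderOf_eq_prime ha fun ha1 => hb.ne ?_
  rw [ha1, Subgroup.closure_insert_one, ← Subgroup.zpowers_eq_closure] at hgen
  rw [← Nat.card_zpowers, hgen, Subgroup.card_top]

theorem card_filter_dvd_not_sq_dvd {p : ℕ} (hp : 0 < p) :
    #{n ∈ range (p ^ 2) | p ∣ n ∧ ¬p ^ 2 ∣ n} = p - 1 := by
  have hrange : range (p ^ 2) = range (p ^ 2 - 1).succ := by
    rw [Nat.succ_eq_add_one, Nat.sub_add_cancel (Nat.one_le_pow _ _ hp)]
  have hdiv : (p ^ 2 - 1) / p = p - 1 := Nat.div_eq_of_lt_le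
    (by rw [Nat.sub_mul, one_mul, sq]; exact Nat.sub_le_sub_left hp _)
    (by rw [Nat.sub_add_cancel hp, sq]; exact Nat.sub_lt (Nat.mul_pos hp hp) Nat.one_pos)
  rw [← hdiv, ← Nat.card_multiples', ← hrange]
  refine congrArg card (filter_congr fun n hn => ?_)
  have hsq : p ^ 2 ∣ n ↔ n = 0 :=
    ⟨fun h => Nat.eq_zero_of_dvd_of_lt h (mem_range.mp hn), fun h => h ▸ dvd_zero _⟩
  rw [hsq, and_comm]

section SemidirectProduct

variable {G : Type*} [Group G] {a b : G} {p q i : ℕ}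
  (hrel : b * a * b⁻¹ = a ^ i) (hp : p.Prime) (hq : q.Prime) (hpq : p ≠ q)
  (ha : orderOf a = q) (hb : orderOf b = p ^ 2) (hi : orderOf (i : ZMod q) = p ^ 2)
include hrel hp hq hpq ha hb hi

theorem orderOf_pow_mul_pow_eq_prime_iff (m n : ℕ) :
    orderOf (a ^ m * b ^ n) = p ↔ p ∣ n ∧ ¬p ^ 2 ∣ n := by
  have := Fact.mk hp
  have hcop : (orderOf a).Coprime (orderOf b) := by
    rw [ha, hb]; exact ((Nat.coprime_primes hq hp).mpr hpq.symm).pow_right 2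
  have hpow := pow_mul_pow_pow hrel m n p
  constructor
  · intro hord
    have hbnp : b ^ (n * p) = 1 :=
      (pow_eq_one_of_pow_mul_pow_eq_one hcop (hpow ▸ hord ▸ pow_orderOf_eq_one _)).2
    have hpn : p ∣ n := by
      have h := orderOf_dvd_of_pow_eq_one hbnp
      rw [hb, sq] at h
      exact Nat.dvd_of_mul_dvd_mul_right hp.pos h
    refine ⟨hpn, fun hn => hp.one_lt.ne' ?_⟩
    rw [orderOf_dvd_iff_pow_eq_one.mp (by rwa [hb] : orderOf b ∣ n), mul_one] at hord
    refine Nat.eq_one_of_dvd_coprimes hcop (hord ▸ orderOf_pow_dvd m) ?_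
    rw [hb]; exact dvd_pow_self p two_ne_zero
  · rintro ⟨hpn, hp2n⟩
    have := Fact.mk hq
    have hnp : p ^ 2 ∣ n * p := by rw [sq]; exact mul_dvd_mul_right hpn p
    have hbnp : b ^ (n * p) = 1 := orderOf_dvd_iff_pow_eq_one.mp (hb ▸ hnp)
    have hsum : q ∣ ∑ j ∈ range p, i ^ (n * j) := by
      rw [← ZMod.natCast_eq_zero_iff]
      push_cast
      simp_rw [pow_mul]
      refine geom_sum_eq_zero_of_pow_eq_one (fun h => hp2n ?_) ?_
      · exact hi ▸ orderOf_dvd_of_pow_eq_one h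
      · exact (pow_mul _ _ _).symm.trans (orderOf_dvd_iff_pow_eq_one.mp (hi ▸ hnp))
    have hapow : a ^ (m * ∑ j ∈ range p, i ^ (n * j)) = 1 :=
      orderOf_dvd_iff_pow_eq_one.mp (ha ▸ dvd_mul_of_dvd_right hsum m)
    refine orderOf_eq_prime (by rw [hpow, hapow, hbnp, one_mul]) fun h => hp2n ?_
    exact hb ▸ orderOf_dvd_of_pow_eq_one (pow_eq_one_of_pow_mul_pow_eq_one hcop h).2

theorem card_orderOf_eq_prime [Fintype G] (hcard : Nat.card G = q * p ^ 2) :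
    Nat.card {g : G // orderOf g = p} = (p - 1) * q := by
  have hcop : (orderOf a).Coprime (orderOf b) := by
    rw [ha, hb]; exact ((Nat.coprime_primes hq hp).mpr hpq.symm).pow_right 2
  rw [Nat.card_eq_fintype_card, Fintype.card_subtype, mul_comm, ← card_filter_dvd_not_sq_dvd hp.pos,
    ← card_range q, ← card_product]
  symm
  refine card_nbij (fun x : ℕ × ℕ => a ^ x.1 * b ^ x.2) ?_ ?_ ?_
  · intro x hx
    simp only [coe_product, coe_filter, coe_range, Set.mem_prod] at hx
    simpa [orderOf_pow_mul_pow_eq_prime_iff hrel hp hq hpq ha hb hi] using hx.2.2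
  · refine (injOn_pow_mul_pow hcop).mono ?_
    rw [ha, hb]; exact coe_subset.mpr (product_subset_product_right (filter_subset _ _))
  · intro g hg
    obtain ⟨⟨m, n⟩, hmn, rfl⟩ := surjOn_pow_mul_pow hcop (by rw [ha, hb, hcard]) (Set.mem_univ g)
    simp only [coe_product, coe_range, Set.mem_prod, Set.mem_Iio, ha, hb] at hmn
    simp only [coe_filter, mem_univ, true_and, Set.mem_ofPred_eq,
      orderOf_pow_mul_pow_eq_prime_iff hrel hp hq hpq ha hb hi] at hg
    exact ⟨(m, n), by simpa [hmn.1, hmn.2] using hg, rfl⟩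

end SemidirectProduct

/-- In `G = Z_q ⋊ Z_{p²}` with `b a b⁻¹ = a^i` where `ord_q i = p²`, an element
`a^m * b^n` with `1 ≤ n < p²` has order `p` iff `p ∣ n`, and `G` has exactly
`(p-1) * q` elements of order `p`. -/
theorem stmt_9 (G : Type*) [Group G] [Finite G] (p q i : ℕ) (hp : p.Prime) (hq : q.Prime)
    (hpq : p < q) (hi : orderOf (i : ZMod q) = p ^ 2)
    (a b : G) (ha : a ^ q = 1) (hb : b ^ (p ^ 2) = 1) (hrel : b * a * b⁻¹ = a ^ i)
    (hgen : Subgroup.closure {a, b} = ⊤) (hcard : Nat.card G = q * p ^ 2) :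
    (∀ m n : ℕ, 1 ≤ n → n < p ^ 2 → (orderOf (a ^ m * b ^ n) = p ↔ p ∣ n)) ∧
      Nat.card {g : G // orderOf g = p} = (p - 1) * q := by
  have hb_dvd : orderOf b ∣ p ^ 2 := orderOf_dvd_of_pow_eq_one hb
  have ha' : orderOf a = q := orderOf_eq_of_closure_pair_eq_top hq ha hgen <| by
    calc orderOf b ≤ p ^ 2 := Nat.le_of_dvd (pow_pos hp.pos 2) hb_dvd
      _ < q * p ^ 2 := lt_mul_of_one_lt_left (pow_pos hp.pos 2) hq.one_lt
      _ = Nat.card G := hcard.symm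
  have hb' : orderOf b = p ^ 2 :=
    Nat.dvd_antisymm hb_dvd (hi ▸ ha' ▸ orderOf_natCast_dvd_orderOf hrel)
  have := Fintype.ofFinite G
  refine ⟨fun m n h1 h2 => ?_, card_orderOf_eq_prime hrel hp hq hpq.ne ha' hb' hi hcard⟩
  rw [orderOf_pow_mul_pow_eq_prime_iff hrel hp hq hpq.ne ha' hb' hi]
  exact and_iff_left fun h => by have := Nat.eq_zero_of_dvd_of_lt h h2; omega
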